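/- arXiv:2112.08292 — 3 statements merged into one kernel-verified Lean document; each statement's English description precedes it below -/
import Mathlib

section
/- For the token-ring Petri net with n ≥ 2 stations each having states {t, n} and transitions n →in t and t →out n, synchronized pairwise by interactions T[i, (i mod n)+1] (out of station i with in of station (i mod n)+1), a precise marking m is a deadlock if and only if either all stations are in state n or all stations are in state t. -/
/-- Places of the token-ring net: station index paired with `true` (= state t,
    has token) or `false` (= state n, no token). -/
abbrev RingPlace (n : ℕ) := Fin (n + 2) × Bool

/-- Pre-set of the transfer transition of station `i`. -/
def ringPre (n : ℕ) (i : Fin (n + 2)) : Set (RingPlace n) :=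
  {(i, true), (i + 1, false)}

/-- Post-set of the transfer transition of station `i`. -/
def ringPost (n : ℕ) (i : Fin (n + 2)) : Set (RingPlace n) :=
  {(i, false), (i + 1, true)}

/-- A marking is precise iff it contains exactly one of `t[i]`, `n[i]` per `i`. -/
def ringPrecise (n : ℕ) (m : Set (RingPlace n)) : Prop :=
  ∀ i : Fin (n + 2), ((i, true) ∈ m ↔ (i, false) ∉ m)

/-- The transfer transition of station `i` is enabled in `m`. -/
def ringEnabled (n : ℕ) (m : Set (RingPlace n)) (i : Fin (n + 2)) : Prop :=
  ringPre n i ⊆ m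

/-- A deadlock is a marking in which no transition is enabled. -/
def ringDeadlock (n : ℕ) (m : Set (RingPlace n)) : Prop :=
  ∀ i : Fin (n + 2), ¬ ringEnabled n m i

/-- The token count of a marking. -/
noncomputable def tokenCount (n : ℕ) (m : Set (RingPlace n)) : ℕ :=
  {i : Fin (n + 2) | (i, true) ∈ m}.ncard

/-- One firing step of the token-ring net. -/
def ringStep (n : ℕ) (m m' : Set (RingPlace n)) : Prop :=
  ∃ i : Fin (n + 2), ringPre n i ⊆ m ∧ m' = (m \ ringPre n i) ∪ ringPost n i


/-! A token followed by an empty station enables a transition, so in a deadlock every token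
propagates around the ring: a single token forces all stations to hold one. -/

open Fin.NatCast in
theorem Fin.forall_of_add_one_closed {k : ℕ} [NeZero k] {p : Fin k → Prop}
    (hsucc : ∀ i, p i → p (i + 1)) {i₀ : Fin k} (h₀ : p i₀) (j : Fin k) : p j := by
  have hreach : ∀ d : ℕ, p (i₀ + (d : Fin k)) := by
    intro d
    induction d with
    | zero => simpa using h₀
    | succ d ih => simpa [Nat.cast_succ, add_assoc] using hsucc _ ih
  simpa [Fin.cast_val_eq_self] using hreach (j - i₀).val

section RingNet

variable {n : ℕ} {m : Set (RingPlace n)}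

theorem ringEnabled_iff {i : Fin (n + 2)} :
    ringEnabled n m i ↔ (i, true) ∈ m ∧ (i + 1, false) ∈ m := by
  simp only [ringEnabled, ringPre, Set.insert_subset_iff, Set.singleton_subset_iff]

theorem ringDeadlock.token_add_one (hd : ringDeadlock n m) (hprec : ringPrecise n m)
    {i : Fin (n + 2)} (hi : (i, true) ∈ m) : (i + 1, true) ∈ m :=
  (hprec (i + 1)).mpr fun hempty => hd i (ringEnabled_iff.mpr ⟨hi, hempty⟩)

theorem ringDeadlock_of_forall_false (hprec : ringPrecise n m)
    (h : ∀ i : Fin (n + 2), (i, false) ∈ m) : ringDeadlock n m :=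
  fun i hen => (hprec i).mp (ringEnabled_iff.mp hen).1 (h i)

theorem ringDeadlock_of_forall_true (hprec : ringPrecise n m)
    (h : ∀ i : Fin (n + 2), (i, true) ∈ m) : ringDeadlock n m :=
  fun i hen => (hprec (i + 1)).mp (h (i + 1)) (ringEnabled_iff.mp hen).2

end RingNet

/-- A precise marking of the token-ring net is a deadlock iff all stations are
    in state n or all stations are in state t. -/
theorem ring_deadlock_iff (n : ℕ) (m : Set (RingPlace n))
    (hprec : ringPrecise n m) :
    ringDeadlock n m ↔
      ((∀ i : Fin (n + 2), (i, false) ∈ m) ∨ (∀ i : Fin (n + 2), (i, true) ∈ m)) := by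
  refine ⟨fun hd => ?_, ?_⟩
  · refine or_iff_not_imp_left.mpr fun hnot => ?_
    obtain ⟨i₀, hempty⟩ := not_forall.mp hnot
    exact Fin.forall_of_add_one_closed (p := fun i => (i, true) ∈ m)
      (fun _ => hd.token_add_one hprec) ((hprec i₀).mpr hempty)
  · rintro (hfalse | htrue)
    · exact ringDeadlock_of_forall_false hprec hfalse
    · exact ringDeadlock_of_forall_true hprec htrue
end

section
/- In the token-ring Petri net with n ≥ 2 stations, from any precise marking with token count k where 1 ≤ k ≤ n−1, some transition is enabled (there is no deadlock). -/
/-! Without an enabled transition a token at station `i` forces a token at station `i + 1`, so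
one token spreads around the whole ring and every station holds one, against the upper bound
on the token count. -/

theorem Fin.eq_univ_of_mem_of_add_one_mem {m : ℕ} {s : Set (Fin (m + 1))} {a : Fin (m + 1)}
    (ha : a ∈ s) (hs : ∀ i ∈ s, i + 1 ∈ s) : s = Set.univ := by
  have h : ∀ j : Fin (m + 1), a + j ∈ s := by
    intro j
    induction j using Fin.induction with
    | zero => simpa using ha
    | succ j ih => simpa [← Fin.coeSucc_eq_succ, ← add_assoc] using hs _ ih
  exact Set.eq_univ_of_forall fun j => by simpa using h (j - a)

theorem ringPrecise.token_succ_of_not_enabled {n : ℕ} {m : Set (RingPlace n)}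
    (hprec : ringPrecise n m) {i : Fin (n + 2)} (hi : ¬ ringEnabled n m i)
    (htok : (i, true) ∈ m) : (i + 1, true) ∈ m := by
  by_contra hnext
  have hidle : (i + 1, false) ∈ m := not_not.mp (mt (hprec (i + 1)).mpr hnext)
  exact hi (Set.insert_subset htok (Set.singleton_subset_iff.mpr hidle))

theorem tokenCount_eq_of_forall_token {n : ℕ} {m : Set (RingPlace n)}
    (h : ∀ i : Fin (n + 2), (i, true) ∈ m) : tokenCount n m = n + 2 := by
  have huniv : {i : Fin (n + 2) | (i, true) ∈ m} = Set.univ := Set.eq_univ_of_forall h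
  rw [tokenCount, huniv, Set.ncard_univ, Nat.card_eq_fintype_card, Fintype.card_fin]

/-- From any precise marking with token count k, 1 ≤ k ≤ (number of stations) − 1,
    some transition is enabled. -/
theorem ring_no_deadlock (n : ℕ) (m : Set (RingPlace n))
    (hprec : ringPrecise n m)
    (hlo : 1 ≤ tokenCount n m) (hhi : tokenCount n m ≤ n + 1) :
    ∃ i : Fin (n + 2), ringEnabled n m i := by
  by_contra hdead
  obtain ⟨i₀, hi₀⟩ : {i : Fin (n + 2) | (i, true) ∈ m}.Nonempty :=
    Set.nonempty_of_ncard_ne_zero (by rw [tokenCount] at hlo; omega)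
  have hall : {i : Fin (n + 2) | (i, true) ∈ m} = Set.univ :=
    Fin.eq_univ_of_mem_of_add_one_mem hi₀
      fun i hi => hprec.token_succ_of_not_enabled (fun hen => hdead ⟨i, hen⟩) hi
  have hfull := tokenCount_eq_of_forall_token (m := m) (Set.eq_univ_iff_forall.mp hall)
  omega
end

section
/- In the token-ring Petri net with n ≥ 2 stations started from a precise initial marking with token count k, if 1 ≤ k ≤ n−1 then no reachable marking is a deadlock. -/
/-!
Firing the transition of station `i` moves the token of station `i` to station `i + 1`, so
precision and the token count are invariant. In a precise marking, the transition of a station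
holding a token is enabled unless its successor holds one too; hence in a precise deadlock the
token set is closed under `· + 1`, and on the cycle `Fin (n + 2)` it is then empty or everything.
-/

open scoped Fin.NatCast

theorem Fin.eq_univ_of_add_one_mem {m : ℕ} [NeZero m] {s : Set (Fin m)} {i : Fin m}
    (hi : i ∈ s) (hs : ∀ j ∈ s, j + 1 ∈ s) : s = Set.univ := by
  have shift_mem : ∀ k : ℕ, i + (k : Fin m) ∈ s := by
    intro k
    induction k with
    | zero => simpa using hi
    | succ k ih => simpa only [Nat.cast_add_one, ← add_assoc] using hs _ ih
  refine Set.eq_univ_of_forall fun j => ?_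
  simpa only [Fin.cast_val_eq_self, add_sub_cancel] using shift_mem (j - i).val

section RingNet

variable {n : ℕ} {m m' : Set (RingPlace n)} {i j : Fin (n + 2)}

theorem mem_fire_true_iff :
    (j, true) ∈ (m \ ringPre n i) ∪ ringPost n i ↔ (j, true) ∈ m ∧ j ≠ i ∨ j = i + 1 := by
  simp [ringPre, ringPost, or_comm]

theorem mem_fire_false_iff :
    (j, false) ∈ (m \ ringPre n i) ∪ ringPost n i ↔ (j, false) ∈ m ∧ j ≠ i + 1 ∨ j = i := by
  simp [ringPre, ringPost, or_comm]

theorem ringPrecise.fire (hp : ringPrecise n m) (hi : ringEnabled n m i) :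
    ringPrecise n ((m \ ringPre n i) ∪ ringPost n i) := by
  have hnext : (i + 1, false) ∈ m := hi (by simp [ringPre])
  have hne : i + 1 ≠ i := by simp
  intro j
  rw [mem_fire_true_iff, mem_fire_false_iff]
  by_cases hj : j = i
  · simp [hj, hne.symm]
  by_cases hj' : j = i + 1
  · simp [hj', hne, hnext]
  simpa [hj, hj'] using hp j

theorem tokenCount_fire (hp : ringPrecise n m) (hi : ringEnabled n m i) :
    tokenCount n ((m \ ringPre n i) ∪ ringPost n i) = tokenCount n m := by
  have htok : (i, true) ∈ m := hi (by simp [ringPre])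
  have hnext : (i + 1, true) ∉ m := fun h => (hp _).mp h (hi (by simp [ringPre]))
  have htokens : {j | (j, true) ∈ (m \ ringPre n i) ∪ ringPost n i} =
      insert (i + 1) ({j | (j, true) ∈ m} \ {i}) := by
    ext j
    simp only [Set.mem_ofPred_eq, mem_fire_true_iff, Set.mem_insert_iff, Set.mem_sdiff,
      Set.mem_singleton_iff]
    tauto
  unfold tokenCount
  rw [htokens, Set.ncard_insert_of_notMem (by simp [hnext]),
    Set.ncard_sdiff_singleton_add_one (show i ∈ {j | (j, true) ∈ m} from htok)]

theorem ringPrecise_and_tokenCount_eq_of_reflTransGen (hp : ringPrecise n m)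
    (hreach : Relation.ReflTransGen (ringStep n) m m') :
    ringPrecise n m' ∧ tokenCount n m' = tokenCount n m := by
  induction hreach with
  | refl => exact ⟨hp, rfl⟩
  | tail _ hstep ih =>
    obtain ⟨i, hi, rfl⟩ := hstep
    exact ⟨ih.1.fire hi, (tokenCount_fire ih.1 hi).trans ih.2⟩

theorem ringDeadlock.mem_add_one (hp : ringPrecise n m) (hd : ringDeadlock n m)
    (hi : (i, true) ∈ m) : (i + 1, true) ∈ m := by
  by_contra hnext
  refine hd i fun x hx => ?_
  obtain rfl | rfl := hx
  · exact hi
  · exact of_not_not fun hfree => hnext ((hp _).mpr hfree)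

theorem ringDeadlock.tokenCount_eq (hp : ringPrecise n m) (hd : ringDeadlock n m) :
    tokenCount n m = 0 ∨ tokenCount n m = n + 2 := by
  obtain hempty | ⟨i, hi⟩ := Set.eq_empty_or_nonempty {j : Fin (n + 2) | (j, true) ∈ m}
  · left
    simp [tokenCount, hempty]
  · right
    have huniv := Fin.eq_univ_of_add_one_mem hi fun j hj => hd.mem_add_one hp hj
    simp [tokenCount, huniv]

end RingNet

/-- Started from a precise initial marking with token count k, 1 ≤ k ≤ n − 1,
    no reachable marking of the token-ring net is a deadlock. -/
theorem ring_reachable_no_deadlock (n : ℕ) (m₀ : Set (RingPlace n))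
    (hprec : ringPrecise n m₀)
    (hlo : 1 ≤ tokenCount n m₀) (hhi : tokenCount n m₀ ≤ n + 1)
    (m : Set (RingPlace n))
    (hreach : Relation.ReflTransGen (ringStep n) m₀ m) :
    ¬ ringDeadlock n m := by
  obtain ⟨hp, hcount⟩ := ringPrecise_and_tokenCount_eq_of_reflTransGen hprec hreach
  intro hd
  have := hd.tokenCount_eq hp
  omega
end
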